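/- Let G be a countable discrete group, K a topological field, and V a pro-finite-dimensional K-vector space with a continuous K-linear G-action. Then B^p(G,V) is closed in Z^p(G,V) for all p ≥ 0. -/

import Mathlib

/-!
A countable power `ι → K` is sequentially linearly compact: a decreasing sequence of nonempty
closed affine subspaces `A k` has a common point. Indeed, the images of the `A k` in each
finite-dimensional stage stabilise for dimension reasons, the stable images form a surjective
inverse system, and a compatible sequence of lifts converges to a point lying in every `A k`.
Cochains `(Fin p → G) → V` form a closed subspace of such a power (`G` is countable and `V`
is a closed subspace of `∏ i, K^{n i}`), so they are linearly compact as well. If `y` lies in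
the closure of the range of the continuous coboundary `d`, then, since subspaces of `K^m` are
closed, the fibres of `d` over the first `m` coordinates of `y` are nonempty closed affine
subspaces; a common point `x` satisfies `d x = y`.
-/

/-- The inverse limit of an inverse sequence of `K`-modules along the connecting
maps `q i : V (i+1) → V i`, realized as the submodule of consistent sequences in
the product `∀ i, V i`. -/
def invLim (K : Type) [Field K] (V : ℕ → Type) [∀ i, AddCommGroup (V i)]
    [∀ i, Module K (V i)] (q : ∀ i, V (i + 1) →ₗ[K] V i) : Submodule K (∀ i, V i) where
  carrier := {v | ∀ i, q i (v (i + 1)) = v i}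
  add_mem' := by intro a b ha hb i; simp [ha i, hb i]
  zero_mem' := by intro i; simp
  smul_mem' := by intro c a ha i; simp [ha i]

/-- The canonical projection `Q i` from the inverse limit to the `i`-th stage. -/
def invLimProj (K : Type) [Field K] (V : ℕ → Type) [∀ i, AddCommGroup (V i)]
    [∀ i, Module K (V i)] (q : ∀ i, V (i + 1) →ₗ[K] V i) (i : ℕ) :
    ↥(invLim K V q) →ₗ[K] V i :=
  (LinearMap.proj i).comp (invLim K V q).subtype

/-- The composite connecting map `q^j_i : V j → V i` for `i ≤ j`. -/
def qIter (K : Type) [Field K] (V : ℕ → Type) [∀ i, AddCommGroup (V i)]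
    [∀ i, Module K (V i)] (q : ∀ i, V (i + 1) →ₗ[K] V i) (i : ℕ) :
    ∀ j, i ≤ j → (V j →ₗ[K] V i)
  | 0, h => by
    have hi : i = 0 := Nat.le_zero.mp h
    subst hi; exact LinearMap.id
  | j + 1, h =>
    if heq : i = j + 1 then by subst heq; exact LinearMap.id
    else (qIter K V q i j (by omega)).comp (q j)

/-- The inhomogeneous bar-resolution coboundary operator
`d : C^p(G,V) → C^{p+1}(G,V)`:
`d f (g_1,…,g_{p+1}) = π(g_1) f(g_2,…,g_{p+1})
  + ∑_{i=1}^{p} (-1)^i f(g_1,…,g_i g_{i+1},…,g_{p+1})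
  + (-1)^{p+1} f(g_1,…,g_p)`. -/
def cochainD {K G V : Type} [Field K] [Group G] [AddCommGroup V] [Module K V]
    (π : Representation K G V) (p : ℕ) (f : (Fin p → G) → V) :
    (Fin (p + 1) → G) → V :=
  fun g =>
    π (g 0) (f (fun i => g i.succ)) +
      (∑ i : Fin p, ((-1 : ℤ) ^ ((i : ℕ) + 1)) •
        f (fun j => if (j : ℕ) < (i : ℕ) then g j.castSucc
          else if (j : ℕ) = (i : ℕ) then g i.castSucc * g i.succ
          else g j.succ)) +
      ((-1 : ℤ) ^ (p + 1)) • f (fun j => g j.castSucc)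

open Set Filter Topology

theorem exists_seq_of_forall_exists_succ {α : Type*} (P : ℕ → α → Prop) (R : ℕ → α → α → Prop)
    (h₀ : ∃ a, P 0 a) (hstep : ∀ m a, P m a → ∃ b, P (m + 1) b ∧ R m a b) :
    ∃ x : ℕ → α, ∀ m, P m (x m) ∧ R m (x m) (x (m + 1)) := by
  choose! next hnext using hstep
  obtain ⟨x₀, hx₀⟩ := h₀
  let x : ℕ → α := fun m => Nat.rec x₀ next m
  have hx : ∀ m, P m (x m) := fun m => Nat.rec hx₀ (fun m ih => (hnext m _ ih).1) m
  exact ⟨x, fun m => ⟨hx m, (hnext m _ (hx m)).2⟩⟩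

theorem AffineSubspace.exists_eq_of_antitone {K E : Type*} [DivisionRing K] [AddCommGroup E]
    [Module K E] [FiniteDimensional K E] (A : ℕ → AffineSubspace K E) (hA : Antitone A)
    (hne : ∀ k, (A k : Set E).Nonempty) : ∃ k₀, ∀ k ≥ k₀, A k = A k₀ := by
  obtain ⟨k₀, hk₀⟩ := IsArtinian.monotone_stabilizes
    ⟨fun k => OrderDual.toDual (A k).direction, fun _ _ h => AffineSubspace.direction_le (hA h)⟩
  exact ⟨k₀, fun k hk =>
    AffineSubspace.eq_of_direction_eq_of_nonempty_of_le (hk₀ k hk).symm (hne k) (hA hk)⟩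

theorem Submodule.isClosed_of_finite_pi {K ι : Type*} [Field K] [TopologicalSpace K]
    [IsTopologicalRing K] [T1Space K] [Finite ι] (W : Submodule K (ι → K)) :
    IsClosed (W : Set (ι → K)) := by
  obtain ⟨W', hW⟩ := W.exists_isCompl
  let P : (ι → K) →L[K] (ι → K) :=
    ⟨W'.subtype ∘ₗ W'.projectionOnto W hW.symm, LinearMap.continuous_on_pi _⟩
  have hP : W = (P : (ι → K) →ₗ[K] (ι → K)).ker := by
    simp [P, LinearMap.ker_comp, Submodule.ker_projectionOnto]
  rw [hP]
  exact P.isClosed_ker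

def SeqLinearlyCompact (K X : Type*) [Ring K] [AddCommGroup X] [Module K X]
    [TopologicalSpace X] : Prop :=
  ∀ A : ℕ → AffineSubspace K X, Antitone A → (∀ k, IsClosed (A k : Set X)) →
    (∀ k, (A k : Set X).Nonempty) → (⋂ k, (A k : Set X)).Nonempty

theorem Topology.IsClosedEmbedding.seqLinearlyCompact {K X Y : Type*} [Ring K]
    [AddCommGroup X] [Module K X] [TopologicalSpace X]
    [AddCommGroup Y] [Module K Y] [TopologicalSpace Y]
    {e : X →ₗ[K] Y} (he : IsClosedEmbedding e) (hY : SeqLinearlyCompact K Y) :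
    SeqLinearlyCompact K X := by
  intro A hA hcl hne
  obtain ⟨y, hy⟩ := hY (fun k => (A k).map e.toAffineMap)
    (fun _ _ h => AffineSubspace.map_mono _ (hA h))
    (fun k => by simpa using he.isClosedMap _ (hcl k))
    (fun k => by simpa using (hne k).image e)
  obtain ⟨x, -, rfl⟩ : y ∈ e '' A 0 := by simpa using mem_iInter.1 hy 0
  refine ⟨x, mem_iInter.2 fun k => ?_⟩
  obtain ⟨x', hx', hxx'⟩ : e x ∈ e '' A k := by simpa using mem_iInter.1 hy k
  rwa [← he.injective hxx']

theorem seqLinearlyCompact_pi (K ι : Type*) [Field K] [TopologicalSpace K] [Countable ι] :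
    SeqLinearlyCompact K (ι → K) := by
  intro A hA hcl hne
  obtain ⟨enc, henc⟩ := exists_injective_nat ι
  have : ∀ m, Finite (enc ⁻¹' Iio m) := fun m => ((finite_Iio m).preimage henc.injOn).to_subtype
  let r : ∀ m, (ι → K) →ₗ[K] (enc ⁻¹' Iio m → K) := fun m => LinearMap.funLeft K K Subtype.val
  have hstab : ∀ m, ∃ k₀, ∀ k ≥ k₀, (A k).map (r m).toAffineMap = (A k₀).map (r m).toAffineMap :=
    fun m => AffineSubspace.exists_eq_of_antitone _
      (fun _ _ h => AffineSubspace.map_mono _ (hA h)) (fun k => by simpa using (hne k).image (r m))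
  let Liftable : ℕ → (ι → K) → Prop := fun m x => x ∈ A m ∧ ∀ k, ∃ a ∈ A k, r m a = r m x
  have hstep : ∀ m x, Liftable m x → ∃ x', Liftable (m + 1) x' ∧ r m x' = r m x := by
    rintro m x ⟨-, hx⟩
    obtain ⟨k₀, hk₀⟩ := hstab (m + 1)
    obtain ⟨a, ha, hax⟩ := hx (max k₀ (m + 1))
    refine ⟨a, ⟨hA (le_max_right _ _) ha, fun k => ?_⟩, hax⟩
    have : r (m + 1) a ∈ (A (max k (max k₀ (m + 1)))).map (r (m + 1)).toAffineMap := by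
      rw [hk₀ _ (le_max_of_le_right (le_max_left _ _)), ← hk₀ _ (le_max_left _ _)]
      exact AffineSubspace.mem_map.2 ⟨a, ha, rfl⟩
    obtain ⟨b, hb, hba⟩ := AffineSubspace.mem_map.1 this
    exact ⟨b, hA (le_max_left _ _) hb, hba⟩
  have hlift₀ : ∃ x, Liftable 0 x := by
    obtain ⟨x, hx⟩ := hne 0
    refine ⟨x, hx, fun k => (hne k).imp fun a ha => ⟨ha, ?_⟩⟩
    exact funext fun i => absurd i.2 (Nat.not_lt_zero _)
  obtain ⟨x, hx⟩ := exists_seq_of_forall_exists_succ Liftable _ hlift₀ hstep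
  have hconst : ∀ i, ∀ m ≥ enc i + 1, x m i = x (enc i + 1) i := by
    intro i m hm
    induction m, hm using Nat.le_induction with
    | base => rfl
    | succ m hm ih => exact (congrFun (hx m).2 ⟨i, show enc i < m by omega⟩).trans ih
  have hlim : Tendsto x atTop (𝓝 fun i => x (enc i + 1) i) :=
    tendsto_pi_nhds.2 fun i => tendsto_atTop_of_eventually_const (hconst i)
  exact ⟨_, mem_iInter.2 fun k => (hcl k).mem_of_tendsto hlim
    (eventually_atTop.2 ⟨k, fun m hm => hA hm (hx m).1.1⟩)⟩

theorem isClosed_range_of_seqLinearlyCompact {K X ι : Type*} [Field K] [TopologicalSpace K]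
    [IsTopologicalRing K] [T1Space K] [AddCommGroup X] [Module K X] [TopologicalSpace X]
    [Countable ι] (hX : SeqLinearlyCompact K X) (f : X →L[K] (ι → K)) :
    IsClosed (range f) := by
  refine closure_subset_iff_isClosed.1 fun y hy => ?_
  obtain ⟨enc, henc⟩ := exists_injective_nat ι
  have : ∀ m, Finite (enc ⁻¹' Iio m) := fun m => ((finite_Iio m).preimage henc.injOn).to_subtype
  let r : ∀ m, (ι → K) →ₗ[K] (enc ⁻¹' Iio m → K) := fun m => LinearMap.funLeft K K Subtype.val
  have hr : ∀ m, Continuous (r m) := fun m => Pi.continuous_precomp _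
  have happrox : ∀ m, r m y ∈ LinearMap.range (r m ∘ₗ (f : X →ₗ[K] ι → K)) := by
    intro m
    rw [← SetLike.mem_coe, ← (Submodule.isClosed_of_finite_pi _).closure_eq, LinearMap.range_comp]
    exact image_closure_subset_closure_image (hr m) ⟨y, hy, rfl⟩
  let S : ℕ → AffineSubspace K X := fun m =>
    (affineSpan K {r m y}).comap (r m ∘ₗ (f : X →ₗ[K] ι → K)).toAffineMap
  have hS : ∀ m, (S m : Set X) = (r m ∘ f) ⁻¹' {r m y} := fun m => by
    simp [S, AffineSubspace.coe_affineSpan_singleton]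
  obtain ⟨x, hx⟩ := hX S
    (fun m m' h x hx => by
      rw [← SetLike.mem_coe, hS] at hx ⊢
      exact funext fun i => congrFun hx ⟨i, lt_of_lt_of_le i.2 h⟩)
    (fun m => hS m ▸ isClosed_singleton.preimage ((hr m).comp f.continuous))
    (fun m => hS m ▸ (happrox m).imp fun x hx => hx)
  refine ⟨x, funext fun i => ?_⟩
  have := mem_iInter.1 hx (enc i + 1)
  rw [hS] at this
  exact congrFun this ⟨i, Nat.lt_succ_self _⟩

theorem isClosed_invLim {K : Type} [Field K] {V : ℕ → Type} [∀ i, AddCommGroup (V i)]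
    [∀ i, Module K (V i)] [∀ i, TopologicalSpace (V i)] [∀ i, T2Space (V i)]
    {q : ∀ i, V (i + 1) →ₗ[K] V i} (hq : ∀ i, Continuous (q i)) :
    IsClosed (invLim K V q : Set (∀ i, V i)) := by
  have : (invLim K V q : Set (∀ i, V i)) = ⋂ i, {v | q i (v (i + 1)) = v i} := by
    ext; simp [invLim]
  rw [this]
  exact isClosed_iInter fun i =>
    isClosed_eq ((hq i).comp (continuous_apply _)) (continuous_apply _)

def Homeomorph.uncurrySigma (A : Type*) {ι : Type*} (β : ι → Type*) (Z : Type*)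
    [TopologicalSpace Z] : (A → ∀ i, β i → Z) ≃ₜ (A × (Σ i, β i) → Z) where
  toFun c e := c e.1 e.2.1 e.2.2
  invFun w a i b := w (a, ⟨i, b⟩)
  left_inv _ := rfl
  right_inv _ := rfl
  continuous_toFun := by fun_prop
  continuous_invFun := by fun_prop

section Coordinates

variable {K : Type} [Field K] [TopologicalSpace K]
  {n : ℕ → ℕ} {q : ∀ i, (Fin (n (i + 1)) → K) →ₗ[K] (Fin (n i) → K)}

variable (K n q) in
def cochainCoords (A : Type*) :
    (A → invLim K (fun i => Fin (n i) → K) q) →L[K] (A × (Σ i, Fin (n i)) → K) where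
  toFun c := Homeomorph.uncurrySigma A (fun i => Fin (n i)) K fun a => (c a : ∀ i, Fin (n i) → K)
  map_add' _ _ := rfl
  map_smul' _ _ := rfl
  cont := by fun_prop

theorem isClosedEmbedding_cochainCoords [T2Space K] (hq : ∀ i, Continuous (q i)) (A : Type*) :
    IsClosedEmbedding (cochainCoords K n q A) :=
  (Homeomorph.isClosedEmbedding _).comp
    (IsClosedEmbedding.piMap fun _ => (isClosed_invLim hq).isClosedEmbedding_subtypeVal)

end Coordinates

section Coboundary

variable {K G V : Type} [Field K] [Group G] [AddCommGroup V] [Module K V]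

def cochainDLinear (π : Representation K G V) (p : ℕ) :
    ((Fin p → G) → V) →ₗ[K] ((Fin (p + 1) → G) → V) where
  toFun := cochainD π p
  map_add' a b := by
    funext g
    simp only [cochainD, Pi.add_apply, map_add, smul_add, Finset.sum_add_distrib]
    abel
  map_smul' c a := by
    funext g
    simp only [cochainD, Pi.smul_apply, map_smul, RingHom.id_apply, smul_add, Finset.smul_sum,
      smul_comm c]

theorem continuous_cochainD [TopologicalSpace V] [IsTopologicalAddGroup V]
    (π : Representation K G V) (hπ : ∀ g, Continuous (π g)) (p : ℕ) :
    Continuous (cochainD π p) :=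
  continuous_pi fun g => (((hπ (g 0)).comp (continuous_apply _)).add
    (continuous_finsetSum _ fun _ _ => (continuous_zsmul _).comp (continuous_apply _))).add
    ((continuous_zsmul _).comp (continuous_apply _))

end Coboundary

/-- For a countable discrete group `G`, a topological field `K`, and a
pro-finite-dimensional `K`-vector space `V` with a continuous `K`-linear `G`-action,
the coboundary group `B^{p+1}(G,V) = d(C^p(G,V))` is closed in the cochain space
`C^{p+1}(G,V)` (hence `B^p` is closed in `Z^p(G,V)`) for all `p ≥ 0`. -/
theorem stmt12 (K : Type) [Field K] [TopologicalSpace K] [IsTopologicalDivisionRing K]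
    [T2Space K]
    (G : Type) [Group G] [Countable G]
    (n : ℕ → ℕ) (q : ∀ i, (Fin (n (i + 1)) → K) →ₗ[K] (Fin (n i) → K))
    (hq : ∀ i, Continuous (q i))
    (π : Representation K G ↥(invLim K (fun i => Fin (n i) → K) q))
    (hπ : ∀ g, Continuous (π g)) (p : ℕ) :
    IsClosed (Set.range (cochainD π p) :
      Set ((Fin (p + 1) → G) → ↥(invLim K (fun i => Fin (n i) → K) q))) := by
  let d : _ →L[K] _ := ⟨cochainDLinear π p, continuous_cochainD π hπ p⟩
  have hsource : SeqLinearlyCompact K ((Fin p → G) → invLim K (fun i => Fin (n i) → K) q) :=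
    (isClosedEmbedding_cochainCoords hq _).seqLinearlyCompact (seqLinearlyCompact_pi K _)
  have htarget := isClosedEmbedding_cochainCoords hq (Fin (p + 1) → G)
  change IsClosed (range d)
  rw [← preimage_image_eq (range d) htarget.injective, ← range_comp]
  exact (isClosed_range_of_seqLinearlyCompact hsource ((cochainCoords K n q _).comp d)).preimage
    htarget.continuous
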